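/- Let Q(l) := lim_{k→∞} k^{2/l} e_k(N(0,I_l))². Let l_0, l ∈ ℕ with l ≥ l_0 and write l = n l_0 + m with n ∈ ℕ and m ∈ {0, …, l_0 − 1}. Then Q(l) ≤ n Q(l_0) + m Q(1). -/

import Mathlib

open MeasureTheory ProbabilityTheory Real Filter

noncomputable section

/-- Minimal `n`-th `L²` quantization error of a probability measure `μ` on a normed space. -/
def quantErrMeas {E : Type*} [NormedAddCommGroup E] [MeasurableSpace E]
    (μ : Measure E) (n : ℕ) : ℝ :=
  sInf { r : ℝ | ∃ α : Finset E, α.Nonempty ∧ α.card ≤ n ∧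
    r = (∫ x, (⨅ a : α, ‖x - (a : E)‖ ^ 2) ∂μ) ^ (1/2 : ℝ) }

/-- The standard Gaussian distribution `N(0, I_l)` on `ℝ^l` with the Euclidean norm. -/
def stdGaussian (l : ℕ) : Measure (EuclideanSpace ℝ (Fin l)) :=
  (Measure.pi fun _ : Fin l => gaussianReal 0 1).map (EuclideanSpace.equiv (Fin l) ℝ).symm

/-! If codebooks `α ⊂ ℝ^a` and `β ⊂ ℝ^b` have distortions `D₁` and `D₂` for `N(0, I_a)` and
`N(0, I_b)`, the product codebook `α × β ⊂ ℝ^{a+b}` has distortion at most `D₁ + D₂` for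
`N(0, I_{a+b}) = N(0, I_a) ⊗ N(0, I_b)`, because the squared Euclidean norm splits over the two
blocks. Hence `e_{k₁k₂}(N(0, I_{a+b}))² ≤ e_{k₁}(N(0, I_a))² + e_{k₂}(N(0, I_b))²`, so for fixed
`j` the sequence `d ↦ e_{j^d}(N(0, I_d))²` is subadditive and
`e_{j^l}(N(0, I_l))² ≤ n e_{j^{l₀}}(N(0, I_{l₀}))² + m e_j(N(0, I_1))²`.
Along `k = j^d` the normalisation `k^{2/d}` is `j²` for every `d`, so multiplying by `j²` and
letting `j → ∞` gives the inequality between the limits. -/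

section Quantization

variable {E E₁ E₂ : Type*} [NormedAddCommGroup E] [NormedAddCommGroup E₁] [NormedAddCommGroup E₂]

lemma iInf_norm_sub_sq_image_prod_le [DecidableEq E] {Φ : E₁ × E₂ → E}
    (hΦ : ∀ p q, ‖Φ p - Φ q‖ ^ 2 ≤ ‖p.1 - q.1‖ ^ 2 + ‖p.2 - q.2‖ ^ 2)
    {α : Finset E₁} {β : Finset E₂} (hα : α.Nonempty) (hβ : β.Nonempty) (p : E₁ × E₂) :
    ⨅ c : (α ×ˢ β).image Φ, ‖Φ p - (c : E)‖ ^ 2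
      ≤ (⨅ a : α, ‖p.1 - (a : E₁)‖ ^ 2) + ⨅ b : β, ‖p.2 - (b : E₂)‖ ^ 2 := by
  have := hα.to_subtype
  have := hβ.to_subtype
  obtain ⟨a, ha⟩ := exists_eq_ciInf_of_finite (f := fun a : α => ‖p.1 - (a : E₁)‖ ^ 2)
  obtain ⟨b, hb⟩ := exists_eq_ciInf_of_finite (f := fun b : β => ‖p.2 - (b : E₂)‖ ^ 2)
  rw [← ha, ← hb]
  have hab : Φ (a, b) ∈ (α ×ˢ β).image Φ :=
    Finset.mem_image_of_mem Φ (Finset.mem_product.2 ⟨a.2, b.2⟩)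
  exact (ciInf_le (Set.finite_range _).bddBelow (⟨_, hab⟩ : (α ×ˢ β).image Φ)).trans (hΦ p (a, b))

variable [MeasurableSpace E] [MeasurableSpace E₁] [MeasurableSpace E₂]
  {μ : Measure E} {μ₁ : Measure E₁} {μ₂ : Measure E₂} {n : ℕ}

def distortion (μ : Measure E) (α : Finset E) : ℝ :=
  ∫ x, ⨅ a : α, ‖x - (a : E)‖ ^ 2 ∂μ

lemma distortion_nonneg (μ : Measure E) (α : Finset E) : 0 ≤ distortion μ α :=
  integral_nonneg fun _ => Real.iInf_nonneg fun _ => sq_nonneg _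

lemma quantErrMeas_nonneg : 0 ≤ quantErrMeas μ n :=
  Real.sInf_nonneg <| by
    rintro r ⟨α, -, -, rfl⟩
    exact Real.rpow_nonneg (distortion_nonneg μ α) _

lemma quantErrMeas_sq_le_distortion {α : Finset E} (hα : α.Nonempty) (hcard : α.card ≤ n) :
    quantErrMeas μ n ^ 2 ≤ distortion μ α := by
  have hbdd : BddBelow {r : ℝ | ∃ α : Finset E, α.Nonempty ∧ α.card ≤ n ∧
      r = distortion μ α ^ (1 / 2 : ℝ)} := by
    refine ⟨0, ?_⟩
    rintro r ⟨β, -, -, rfl⟩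
    exact Real.rpow_nonneg (distortion_nonneg μ β) _
  have hle : quantErrMeas μ n ≤ √(distortion μ α) := by
    rw [Real.sqrt_eq_rpow]
    exact csInf_le hbdd ⟨α, hα, hcard, rfl⟩
  exact (Real.le_sqrt quantErrMeas_nonneg (distortion_nonneg μ α)).1 hle

lemma exists_distortion_lt (hn : 1 ≤ n) {r : ℝ} (hr : quantErrMeas μ n ^ 2 < r) :
    ∃ α : Finset E, α.Nonempty ∧ α.card ≤ n ∧ distortion μ α < r := by
  have hlt : quantErrMeas μ n < √r := (Real.lt_sqrt quantErrMeas_nonneg).2 hr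
  have hne : {r : ℝ | ∃ α : Finset E, α.Nonempty ∧ α.card ≤ n ∧
      r = distortion μ α ^ (1 / 2 : ℝ)}.Nonempty :=
    ⟨_, {0}, Finset.singleton_nonempty 0, by simpa using hn, rfl⟩
  obtain ⟨_, ⟨α, hα, hcard, rfl⟩, hα_lt⟩ := exists_lt_of_csInf_lt hne hlt
  rw [← Real.sqrt_eq_rpow] at hα_lt
  exact ⟨α, hα, hcard, (Real.sqrt_lt_sqrt_iff (distortion_nonneg μ α)).1 hα_lt⟩

lemma quantErrMeas_of_subsingleton [Subsingleton E] (hn : 1 ≤ n) : quantErrMeas μ n = 0 := by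
  have hzero : distortion μ {0} = 0 := by
    simp [distortion, Subsingleton.elim _ (0 : E)]
  have hle := quantErrMeas_sq_le_distortion (μ := μ) (Finset.singleton_nonempty 0)
    (by simpa using hn)
  rw [hzero] at hle
  exact (pow_eq_zero_iff two_ne_zero).1 (le_antisymm hle (sq_nonneg _))

lemma measurable_iInf_norm_sub_sq [OpensMeasurableSpace E] (α : Finset E) :
    Measurable fun x : E => ⨅ a : α, ‖x - (a : E)‖ ^ 2 :=
  Measurable.iInf fun a => (by fun_prop : Continuous fun x : E => ‖x - (a : E)‖ ^ 2).measurable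

lemma integrable_iInf_norm_sub_sq [OpensMeasurableSpace E] [IsFiniteMeasure μ]
    (hμ : MemLp id 2 μ) {α : Finset E} (hα : α.Nonempty) :
    Integrable (fun x : E => ⨅ a : α, ‖x - (a : E)‖ ^ 2) μ := by
  obtain ⟨a₀, ha₀⟩ := hα
  refine Integrable.mono' (hμ.sub (memLp_const a₀)).integrable_norm_pow'
    (measurable_iInf_norm_sub_sq α).aestronglyMeasurable (ae_of_all _ fun x => ?_)
  rw [Real.norm_of_nonneg (Real.iInf_nonneg fun _ => sq_nonneg _)]
  exact ciInf_le (Set.finite_range _).bddBelow (⟨a₀, ha₀⟩ : α)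

variable [OpensMeasurableSpace E] [OpensMeasurableSpace E₁] [OpensMeasurableSpace E₂]
  [IsProbabilityMeasure μ₁] [IsProbabilityMeasure μ₂] {Φ : E₁ × E₂ → E}

lemma distortion_image_prod_le [DecidableEq E] (hΦ : MeasurePreserving Φ (μ₁.prod μ₂) μ)
    (hΦ_dist : ∀ p q, ‖Φ p - Φ q‖ ^ 2 ≤ ‖p.1 - q.1‖ ^ 2 + ‖p.2 - q.2‖ ^ 2)
    (hμ₁ : MemLp id 2 μ₁) (hμ₂ : MemLp id 2 μ₂)
    {α : Finset E₁} {β : Finset E₂} (hα : α.Nonempty) (hβ : β.Nonempty) :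
    distortion μ ((α ×ˢ β).image Φ) ≤ distortion μ₁ α + distortion μ₂ β := by
  have hint₁ := integrable_iInf_norm_sub_sq hμ₁ hα
  have hint₂ := integrable_iInf_norm_sub_sq hμ₂ hβ
  calc distortion μ ((α ×ˢ β).image Φ)
      = ∫ p, ⨅ c : (α ×ˢ β).image Φ, ‖Φ p - (c : E)‖ ^ 2 ∂(μ₁.prod μ₂) := by
        rw [distortion, ← hΦ.map_eq, integral_map hΦ.measurable.aemeasurable
          (measurable_iInf_norm_sub_sq _).aestronglyMeasurable]
    _ ≤ ∫ p, ((⨅ a : α, ‖p.1 - (a : E₁)‖ ^ 2) + ⨅ b : β, ‖p.2 - (b : E₂)‖ ^ 2) ∂(μ₁.prod μ₂) :=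
        integral_mono_of_nonneg (ae_of_all _ fun _ => Real.iInf_nonneg fun _ => sq_nonneg _)
          ((hint₁.comp_fst μ₂).add (hint₂.comp_snd μ₁))
          (ae_of_all _ (iInf_norm_sub_sq_image_prod_le hΦ_dist hα hβ))
    _ = distortion μ₁ α + distortion μ₂ β := by
        rw [integral_add (hint₁.comp_fst μ₂) (hint₂.comp_snd μ₁),
          integral_fun_fst (fun x : E₁ => ⨅ a : α, ‖x - (a : E₁)‖ ^ 2),
          integral_fun_snd (fun y : E₂ => ⨅ b : β, ‖y - (b : E₂)‖ ^ 2)]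
        simp [distortion]

theorem quantErrMeas_mul_sq_le (hΦ : MeasurePreserving Φ (μ₁.prod μ₂) μ)
    (hΦ_dist : ∀ p q, ‖Φ p - Φ q‖ ^ 2 ≤ ‖p.1 - q.1‖ ^ 2 + ‖p.2 - q.2‖ ^ 2)
    (hμ₁ : MemLp id 2 μ₁) (hμ₂ : MemLp id 2 μ₂) {k₁ k₂ : ℕ} (hk₁ : 1 ≤ k₁) (hk₂ : 1 ≤ k₂) :
    quantErrMeas μ (k₁ * k₂) ^ 2 ≤ quantErrMeas μ₁ k₁ ^ 2 + quantErrMeas μ₂ k₂ ^ 2 := by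
  classical
  refine le_of_forall_pos_lt_add fun ε hε => ?_
  obtain ⟨α, hα, hα_card, hα_lt⟩ :=
    exists_distortion_lt hk₁ (lt_add_of_pos_right (quantErrMeas μ₁ k₁ ^ 2) (half_pos hε))
  obtain ⟨β, hβ, hβ_card, hβ_lt⟩ :=
    exists_distortion_lt hk₂ (lt_add_of_pos_right (quantErrMeas μ₂ k₂ ^ 2) (half_pos hε))
  have hcard : ((α ×ˢ β).image Φ).card ≤ k₁ * k₂ := Finset.card_image_le.trans
    ((Finset.card_product α β).trans_le (Nat.mul_le_mul hα_card hβ_card))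
  calc quantErrMeas μ (k₁ * k₂) ^ 2 ≤ distortion μ ((α ×ˢ β).image Φ) :=
        quantErrMeas_sq_le_distortion ((hα.product hβ).image Φ) hcard
    _ ≤ distortion μ₁ α + distortion μ₂ β :=
        distortion_image_prod_le hΦ hΦ_dist hμ₁ hμ₂ hα hβ
    _ < _ := by linarith

end Quantization

section Gaussian

open Module WithLp

variable {U V W : Type*}
  [NormedAddCommGroup U] [InnerProductSpace ℝ U] [FiniteDimensional ℝ U]
  [MeasurableSpace U] [BorelSpace U]
  [NormedAddCommGroup V] [InnerProductSpace ℝ V] [FiniteDimensional ℝ V]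
  [MeasurableSpace V] [BorelSpace V]
  [NormedAddCommGroup W] [InnerProductSpace ℝ W] [FiniteDimensional ℝ W]
  [MeasurableSpace W] [BorelSpace W]

lemma map_toLp_prod_stdGaussian :
    ((ProbabilityTheory.stdGaussian U).prod (ProbabilityTheory.stdGaussian V)).map (toLp 2)
      = ProbabilityTheory.stdGaussian (WithLp 2 (U × V)) := by
  refine Measure.ext_of_charFun (funext fun t => ?_)
  rw [charFun_prod, charFun_stdGaussian, charFun_stdGaussian, charFun_stdGaussian,
    ← Complex.exp_add]
  simp only [← Complex.ofReal_pow, prod_norm_sq_eq_of_L2, ofLp_fst, ofLp_snd]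
  push_cast
  congr 1
  ring

theorem quantErrMeas_stdGaussian_mul_sq_le (h : finrank ℝ W = finrank ℝ U + finrank ℝ V)
    {k₁ k₂ : ℕ} (hk₁ : 1 ≤ k₁) (hk₂ : 1 ≤ k₂) :
    quantErrMeas (ProbabilityTheory.stdGaussian W) (k₁ * k₂) ^ 2
      ≤ quantErrMeas (ProbabilityTheory.stdGaussian U) k₁ ^ 2
        + quantErrMeas (ProbabilityTheory.stdGaussian V) k₂ ^ 2 := by
  have hdim : finrank ℝ (WithLp 2 (U × V)) = finrank ℝ W := by
    rw [h, (WithLp.linearEquiv 2 ℝ (U × V)).finrank_eq, finrank_prod]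
  let e : WithLp 2 (U × V) ≃ₗᵢ[ℝ] W :=
    (stdOrthonormalBasis ℝ _).equiv (stdOrthonormalBasis ℝ W) (finCongr hdim)
  -- `U × V` carries the sup norm; through `toLp 2` the squared norm splits over the factors.
  refine quantErrMeas_mul_sq_le (Φ := e ∘ toLp 2) ⟨by fun_prop, ?_⟩ (fun p q => ?_)
    IsGaussian.memLp_two_id IsGaussian.memLp_two_id hk₁ hk₂
  · rw [← Measure.map_map (by fun_prop) (by fun_prop), map_toLp_prod_stdGaussian,
      stdGaussian_map]
  · rw [Function.comp_apply, Function.comp_apply, ← map_sub, LinearIsometryEquiv.norm_map,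
      ← toLp_sub, prod_norm_sq_eq_of_L2]
    rfl

end Gaussian

lemma stdGaussian_eq_stdGaussian_euclideanSpace (l : ℕ) :
    stdGaussian l = ProbabilityTheory.stdGaussian (EuclideanSpace ℝ (Fin l)) :=
  map_pi_eq_stdGaussian

lemma subadditive_quantErrMeas_stdGaussian_pow {j : ℕ} (hj : 1 ≤ j) :
    Subadditive fun d => quantErrMeas (stdGaussian d) (j ^ d) ^ 2 := fun c d => by
  simp only [stdGaussian_eq_stdGaussian_euclideanSpace, pow_add]
  exact quantErrMeas_stdGaussian_mul_sq_le (by simp) (Nat.one_le_pow _ _ hj)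
    (Nat.one_le_pow _ _ hj)

lemma Subadditive.apply_mul_add_le_mul_add_mul {u : ℕ → ℝ} (hu : Subadditive u) (h₀ : u 0 ≤ 0)
    (n a m : ℕ) : u (n * a + m) ≤ n * u a + m * u 1 := by
  have hm : u m ≤ m * u 1 := by
    simpa using (hu.apply_mul_add_le m 1 0).trans (add_le_of_nonpos_right h₀)
  linarith [hu.apply_mul_add_le n a m]

lemma tendsto_rpow_mul_comp_pow {f : ℕ → ℝ} {r L : ℝ} {d : ℕ} (hd : d ≠ 0)
    (hf : Tendsto (fun k : ℕ => (k : ℝ) ^ (r / d) * f k) atTop (nhds L)) :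
    Tendsto (fun j : ℕ => (j : ℝ) ^ r * f (j ^ d)) atTop (nhds L) := by
  refine (hf.comp (tendsto_pow_atTop hd)).congr fun j => ?_
  simp only [Function.comp_apply, Nat.cast_pow]
  rw [← Real.rpow_natCast_mul (Nat.cast_nonneg j), mul_div_cancel₀ _ (Nat.cast_ne_zero.2 hd)]

theorem Qconst_block_inequality_general
    (Q : ℕ → ℝ)
    (hQ : ∀ l : ℕ, 1 ≤ l →
      Tendsto (fun k : ℕ => (k : ℝ) ^ (2 / (l : ℝ)) * (quantErrMeas (stdGaussian l) k) ^ 2)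
        atTop (nhds (Q l)))
    (l₀ l n m : ℕ) (hl₀ : 1 ≤ l₀) (hl : l₀ ≤ l)
    (hdecomp : l = n * l₀ + m) :
    Q l ≤ n * Q l₀ + m * Q 1 := by
  have hlim : ∀ d, 1 ≤ d → Tendsto (fun j : ℕ => (j : ℝ) ^ (2 : ℝ) *
      quantErrMeas (stdGaussian d) (j ^ d) ^ 2) atTop (nhds (Q d)) :=
    fun d hd => tendsto_rpow_mul_comp_pow (by omega) (hQ d hd)
  refine le_of_tendsto_of_tendsto (hlim l (hl₀.trans hl))
    (((hlim l₀ hl₀).const_mul (n : ℝ)).add ((hlim 1 le_rfl).const_mul (m : ℝ))) ?_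
  filter_upwards [eventually_ge_atTop 1] with j hj
  have hblock := (subadditive_quantErrMeas_stdGaussian_pow hj).apply_mul_add_le_mul_add_mul
    (by simp [quantErrMeas_of_subsingleton]) n l₀ m
  rw [← hdecomp] at hblock
  calc (j : ℝ) ^ (2 : ℝ) * quantErrMeas (stdGaussian l) (j ^ l) ^ 2
      ≤ (j : ℝ) ^ (2 : ℝ) * (n * quantErrMeas (stdGaussian l₀) (j ^ l₀) ^ 2
          + m * quantErrMeas (stdGaussian 1) (j ^ 1) ^ 2) :=
        mul_le_mul_of_nonneg_left hblock (Real.rpow_nonneg (Nat.cast_nonneg j) 2)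
    _ = _ := by ring

/-- Writing `l = n l₀ + m` with `0 ≤ m < l₀ ≤ l`, the Zador constants
`Q(l) = lim_{k→∞} k^{2/l} e_k(N(0,I_l))²` satisfy `Q(l) ≤ n Q(l₀) + m Q(1)`. -/
theorem Qconst_block_inequality
    (Q : ℕ → ℝ)
    (hQ : ∀ l : ℕ, 1 ≤ l →
      Tendsto (fun k : ℕ => (k : ℝ) ^ (2 / (l : ℝ)) * (quantErrMeas (stdGaussian l) k) ^ 2)
        atTop (nhds (Q l)))
    (l₀ l n m : ℕ) (hl₀ : 1 ≤ l₀) (hl : l₀ ≤ l)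
    (hdecomp : l = n * l₀ + m) (hm : m < l₀) :
    Q l ≤ n * Q l₀ + m * Q 1 :=
  Qconst_block_inequality_general Q hQ l₀ l n m hl₀ hl hdecomp

end
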